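/- For every integer g ≥ 1 there exists a polynomial P_g ∈ ℚ[y] of degree at most g − 1 such that (1 − 24w)^{5g−1} · W_g = w · P_g(w), where P_g(w) denotes substitution of w into P_g. In particular, W₁ = 96·w·(1 − 24w)⁻⁴. -/

import Mathlib

open PowerSeries

/-- The formal derivative `d/dx` on `ℚ⟦x⟧`. -/
noncomputable def D : PowerSeries ℚ → PowerSeries ℚ := PowerSeries.derivativeFun

/-! Put `u = 1 - 24w`. Differentiating `x = w - 12w²` gives `u·w' = 1`, so the derivative of a
quotient `q(w)/u^m` is `(u q' + 24 m q)(w)/u^(m+2)`: the degree of the numerator does not grow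
while the exponent of `u` grows by two. Say that `f` has type `(d, m)` if `u^m f = q(w)` with
`deg q ≤ d` (`IsPolyDivPow`). Types add under multiplication, and multiplying numerator and
denominator by `u` turns type `(d, m)` into `(d + 1, m + 1)`. After the two terms `12·w·W_g` are
moved to the left, the recursion expresses `u W_g` through products `W_{g₁} W_{g₂}` with
`g₁, g₂ ≥ 1`, of type `(g, 5g - 2)`, and products `W_{g₁} D^{2j} W_{g₂}`, of type
`(g - j + 1, 5g - j - 1)`, hence again of type `(g, 5g - 2)`. So by strong induction `W_g` has type
`(g, 5g - 1)`; as every `W_g` has zero constant term, the numerator is `w·P(w)` with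
`deg P ≤ g - 1`. For `g = 1` the recursion reads `u W₁ = 4 w w''`, and `u³ w'' = 24`. -/

theorem Finset.Nat.sum_antidiagonal_succ_eq_add_add_sum {M : Type*} [AddCommMonoid M]
    (f : ℕ × ℕ → M) (n : ℕ) :
    ∑ p ∈ antidiagonal (n + 1), f p =
      f (0, n + 1) + f (n + 1, 0) + ∑ i ∈ range n, f (i + 1, n - i) := by
  rw [Finset.Nat.sum_antidiagonal_eq_sum_range_succ_mk, sum_range_succ, sum_range_succ']
  simp only [Nat.sub_zero, Nat.sub_self, Nat.add_sub_add_right]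
  abel

theorem Derivation.map_ofNat {R A M : Type*} [CommSemiring R] [CommSemiring A] [Algebra R A]
    [AddCommMonoid M] [Module A M] [Module R M] (δ : Derivation R A M) (n : ℕ) [n.AtLeastTwo] :
    δ (ofNat(n) : A) = 0 :=
  δ.map_natCast n

open Polynomial in
def IsPolyDivPow {R A : Type*} [CommRing R] [CommRing A] [Algebra R A]
    (p : R[X]) (w : A) (d m : ℕ) (f : A) : Prop :=
  ∃ q : R[X], q.natDegree ≤ d ∧ aeval w p ^ m * f = aeval w q

namespace IsPolyDivPow

open Polynomial

variable {R A : Type*} [CommRing R] [CommRing A] [Algebra R A] {p : R[X]} {w : A} {d m : ℕ}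
  {f g : A}

theorem zero : IsPolyDivPow p w d m 0 := ⟨0, by simp⟩

theorem add (hf : IsPolyDivPow p w d m f) (hg : IsPolyDivPow p w d m g) :
    IsPolyDivPow p w d m (f + g) := by
  obtain ⟨q, hq, hfq⟩ := hf
  obtain ⟨q', hq', hgq'⟩ := hg
  exact ⟨q + q', (natDegree_add_le _ _).trans (max_le hq hq'),
    by rw [mul_add, hfq, hgq', map_add]⟩

theorem sum {ι : Type*} {s : Finset ι} {f : ι → A}
    (h : ∀ i ∈ s, IsPolyDivPow p w d m (f i)) :
    IsPolyDivPow p w d m (∑ i ∈ s, f i) := by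
  classical
  induction s using Finset.induction_on with
  | empty => simpa using zero
  | insert i s hi ih =>
    rw [Finset.sum_insert hi]
    exact (h i (s.mem_insert_self i)).add (ih fun j hj => h j (Finset.mem_insert_of_mem hj))

theorem algebraMap_mul (c : R) (hf : IsPolyDivPow p w d m f) :
    IsPolyDivPow p w d m (algebraMap R A c * f) := by
  obtain ⟨q, hq, hfq⟩ := hf
  refine ⟨Polynomial.C c * q, natDegree_C_mul_le c q |>.trans hq, ?_⟩
  rw [map_mul, aeval_C, ← hfq]
  ring

theorem mul {d' m' : ℕ} (hf : IsPolyDivPow p w d m f) (hg : IsPolyDivPow p w d' m' g) :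
    IsPolyDivPow p w (d + d') (m + m') (f * g) := by
  obtain ⟨q, hq, hfq⟩ := hf
  obtain ⟨q', hq', hgq'⟩ := hg
  refine ⟨q * q', natDegree_mul_le.trans (add_le_add hq hq'), ?_⟩
  rw [map_mul, ← hfq, ← hgq', pow_add]
  ring

theorem of_aeval_mul (hf : IsPolyDivPow p w d m (aeval w p * f)) :
    IsPolyDivPow p w d (m + 1) f := by
  obtain ⟨q, hq, hfq⟩ := hf
  exact ⟨q, hq, by rw [← hfq, pow_succ, mul_assoc]⟩

theorem weaken (hp : p.natDegree ≤ 1) {d' m' : ℕ} (hf : IsPolyDivPow p w d m f) (hm : m ≤ m')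
    (hd : d + (m' - m) ≤ d') : IsPolyDivPow p w d' m' f := by
  obtain ⟨q, hq, hfq⟩ := hf
  refine ⟨p ^ (m' - m) * q, ?_, ?_⟩
  · have := natDegree_pow_le_of_le (m' - m) hp
    exact natDegree_mul_le.trans (by omega)
  · rw [map_mul, map_pow, ← hfq, mul_left_comm, ← mul_assoc, ← pow_add,
      Nat.add_sub_cancel' hm]

theorem self : IsPolyDivPow p w 1 0 w := ⟨X, natDegree_X_le, by simp⟩

variable (δ : Derivation R A A)

theorem deriv_self (hδ : aeval w p * δ w = 1) : IsPolyDivPow p w 0 1 (δ w) :=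
  ⟨1, by simp, by simpa⟩

theorem deriv (hp : p.natDegree ≤ 1) (hδ : aeval w p * δ w = 1) (hf : IsPolyDivPow p w d m f) :
    IsPolyDivPow p w d (m + 2) (δ f) := by
  obtain ⟨q, hq, hfq⟩ := hf
  refine ⟨p * derivative q - m * (derivative p * q), ?_, ?_⟩
  · have hpq : (p * derivative q).natDegree ≤ d := by
      rcases Nat.eq_zero_or_pos q.natDegree with hq0 | hq0
      · simp [derivative_of_natDegree_zero hq0]
      · have := natDegree_mul_le_of_le hp (natDegree_derivative_le q)
        omega
    have hp'q : (↑m * (derivative p * q)).natDegree ≤ d := by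
      have := natDegree_mul_le_of_le (natDegree_derivative_le p) hq
      rw [← C_eq_natCast]
      exact (natDegree_C_mul_le _ _).trans (by omega)
    exact (natDegree_sub_le _ _).trans (max_le hpq hp'q)
  · have hd := congrArg δ hfq
    simp only [Derivation.leibniz, Derivation.leibniz_pow, Derivation.map_aeval, smul_eq_mul,
      nsmul_eq_mul] at hd
    simp only [map_sub, map_mul, map_natCast]
    rcases m with _ | k
    · simp only [pow_zero, one_mul, Nat.cast_zero, zero_mul, sub_zero, zero_tsub] at hd hfq ⊢
      linear_combination (aeval w p) ^ 2 * hd + aeval w p * aeval w (derivative q) * hδ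
    · simp only [Nat.add_sub_cancel, Nat.cast_succ] at hd ⊢
      linear_combination (aeval w p) ^ 2 * hd + aeval w p * aeval w (derivative q) * hδ
        - (k + 1) * aeval w (derivative p) * hfq
        - (k + 1) * aeval w (derivative p) * aeval w p ^ (k + 1) * f * hδ

theorem iterate_deriv (hp : p.natDegree ≤ 1) (hδ : aeval w p * δ w = 1) (k : ℕ)
    (hf : IsPolyDivPow p w d m f) : IsPolyDivPow p w d (m + 2 * k) (δ^[k] f) := by
  induction k with
  | zero => simpa using hf
  | succ k ih =>
    rw [Function.iterate_succ_apply']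
    exact ih.deriv δ hp hδ

theorem iterate_deriv_self (hp : p.natDegree ≤ 1) (hδ : aeval w p * δ w = 1) {k : ℕ}
    (hk : 1 ≤ k) : IsPolyDivPow p w 0 (2 * k - 1) (δ^[k] w) := by
  obtain ⟨k, rfl⟩ := Nat.exists_eq_add_of_le' hk
  rw [Function.iterate_succ_apply, show 2 * (k + 1) - 1 = 1 + 2 * k by omega]
  exact (deriv_self δ hδ).iterate_deriv δ hp hδ k

end IsPolyDivPow

theorem IsPolyDivPow.exists_eq_mul_of_constantCoeff {R : Type*} [CommRing R] {p : Polynomial R}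
    {w f : R⟦X⟧} {d m : ℕ} (hw : constantCoeff w = 0) (hf : constantCoeff f = 0)
    (h : IsPolyDivPow p w d m f) :
    ∃ P : Polynomial R, P.natDegree ≤ d - 1 ∧
      Polynomial.aeval w p ^ m * f = w * Polynomial.aeval w P := by
  obtain ⟨q, hq, hfq⟩ := h
  have hq0 : q.coeff 0 = 0 := by
    simpa [hf, hw, Polynomial.aeval_def, Polynomial.hom_eval₂] using
      (congrArg constantCoeff hfq).symm
  refine ⟨q.divX, by rw [Polynomial.natDegree_divX_eq_natDegree_tsub_one]; omega, ?_⟩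
  rw [hfq]
  conv_lhs => rw [← q.X_mul_divX_add, hq0, map_zero, add_zero, map_mul, Polynomial.aeval_X]

theorem D_eq_derivative : D = ⇑(d⁄dX ℚ) := rfl

def SatisfiesGenusRecursion (W : ℕ → ℚ⟦X⟧) : Prop :=
  ∀ g, 1 ≤ g →
    W g = 12 * ∑ p ∈ Finset.HasAntidiagonal.antidiagonal g, W p.1 * W p.2
      + 8 * ∑ j ∈ Finset.Icc 1 g, ∑ r ∈ Finset.HasAntidiagonal.antidiagonal (g - j),
          C (1 / ((2 * j).factorial : ℚ)) * (W r.1 * D^[2 * j] (W r.2))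

section GenusRecursion

variable {w : ℚ⟦X⟧} {W : ℕ → ℚ⟦X⟧}

theorem one_sub_mul_D_eq_one (hw : (X : ℚ⟦X⟧) = w - 12 * w ^ 2) : (1 - 24 * w) * D w = 1 := by
  have h := congrArg (d⁄dX ℚ) hw
  simp only [derivative_X, map_sub, Derivation.leibniz, Derivation.leibniz_pow,
    Derivation.map_ofNat] at h
  rw [D_eq_derivative]
  linear_combination -h

theorem one_sub_mul_W_succ (hW0 : W 0 = w) (hWg : SatisfiesGenusRecursion W) (n : ℕ) :
    (1 - 24 * w) * W (n + 1) = 12 * ∑ i ∈ Finset.range n, W (i + 1) * W (n - i)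
      + 8 * ∑ j ∈ Finset.Icc 1 (n + 1),
          ∑ r ∈ Finset.HasAntidiagonal.antidiagonal (n + 1 - j),
            C (1 / ((2 * j).factorial : ℚ)) * (W r.1 * D^[2 * j] (W r.2)) := by
  have h := hWg (n + 1) n.succ_pos
  rw [Finset.Nat.sum_antidiagonal_succ_eq_add_add_sum, hW0] at h
  linear_combination h

theorem constantCoeff_W (hw0 : constantCoeff w = 0) (hW0 : W 0 = w)
    (hWg : SatisfiesGenusRecursion W) (g : ℕ) : constantCoeff (W g) = 0 := by
  induction g using Nat.strong_induction_on with
  | _ g IH =>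
  rcases g with _ | n
  · rwa [hW0]
  have h := congrArg constantCoeff (one_sub_mul_W_succ hW0 hWg n)
  simp only [map_mul, map_sub, map_one, hw0, map_add, map_sum, map_ofNat] at h
  rw [Finset.sum_eq_zero, Finset.sum_eq_zero] at h
  · simpa using h
  · intro j hj
    refine Finset.sum_eq_zero fun r hr => ?_
    rw [Finset.mem_Icc] at hj
    rw [Finset.HasAntidiagonal.mem_antidiagonal] at hr
    rw [IH r.1 (by omega)]
    ring
  · intro i hi
    rw [IH (i + 1) (by simp at hi; omega), zero_mul]

theorem natDegree_one_sub_mul_X_le : (1 - 24 * Polynomial.X : Polynomial ℚ).natDegree ≤ 1 := by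
  compute_degree

theorem aeval_one_sub_mul_X :
    Polynomial.aeval w (1 - 24 * Polynomial.X : Polynomial ℚ) = 1 - 24 * w := by
  rw [map_sub, map_one, map_mul, Polynomial.aeval_X, map_ofNat]

theorem isPolyDivPow_W (hDw : (1 - 24 * w) * D w = 1) (hW0 : W 0 = w)
    (hWg : SatisfiesGenusRecursion W) (g : ℕ) (hg : 1 ≤ g) :
    IsPolyDivPow (1 - 24 * Polynomial.X : Polynomial ℚ) w g (5 * g - 1) (W g) := by
  induction g using Nat.strong_induction_on with
  | _ g IH =>
  obtain ⟨n, rfl⟩ := Nat.exists_eq_add_of_le' hg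
  have hp := natDegree_one_sub_mul_X_le
  have hδ : Polynomial.aeval w (1 - 24 * Polynomial.X : Polynomial ℚ) * d⁄dX ℚ w = 1 := by
    rwa [aeval_one_sub_mul_X]
  have hW : ∀ h ≤ n,
      IsPolyDivPow (1 - 24 * Polynomial.X : Polynomial ℚ) w (h + 1) (5 * h) (W h) := by
    rintro (_ | h) hh
    · rw [hW0]; exact .self
    · exact (IH (h + 1) (by omega) (by omega)).weaken hp (by omega) (by omega)
  have hDW : ∀ h ≤ n, ∀ j, 1 ≤ j →
      IsPolyDivPow (1 - 24 * Polynomial.X : Polynomial ℚ) w h (5 * h + 4 * j - 1)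
        (D^[2 * j] (W h)) := by
    rintro (_ | h) hh j hj
    · rw [hW0]
      exact (IsPolyDivPow.iterate_deriv_self _ hp hδ (by omega)).weaken hp (by omega) (by omega)
    · exact ((IH (h + 1) (by omega) (by omega)).iterate_deriv _ hp hδ (2 * j)).weaken hp
        (by omega) (by omega)
  rw [show 5 * (n + 1) - 1 = 5 * n + 3 + 1 by omega]
  apply IsPolyDivPow.of_aeval_mul
  rw [aeval_one_sub_mul_X,
    one_sub_mul_W_succ hW0 hWg, map_ofNat (algebraMap ℚ ℚ⟦X⟧) 12 |>.symm,
    map_ofNat (algebraMap ℚ ℚ⟦X⟧) 8 |>.symm]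
  refine .add (.algebraMap_mul _ <| .sum fun i hi => ?_)
    (.algebraMap_mul _ <| .sum fun j hj => .sum fun r hr => ?_)
  · rw [Finset.mem_range] at hi
    exact ((IH (i + 1) (by omega) (by omega)).mul (IH (n - i) (by omega) (by omega))).weaken hp
      (by omega) (by omega)
  · rw [Finset.mem_Icc] at hj
    rw [Finset.HasAntidiagonal.mem_antidiagonal] at hr
    rw [C_eq_algebraMap]
    exact .algebraMap_mul _ (((hW r.1 (by omega)).mul (hDW r.2 (by omega) j hj.1)).weaken hp
      (by omega) (by omega))

theorem one_sub_pow_three_mul_D_D (hDw : (1 - 24 * w) * D w = 1) :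
    (1 - 24 * w) ^ 3 * D (D w) = 24 := by
  rw [D_eq_derivative] at hDw ⊢
  have h := congrArg (d⁄dX ℚ) hDw
  simp only [Derivation.leibniz, map_sub, Derivation.map_one_eq_zero, Derivation.map_ofNat,
    smul_eq_mul] at h
  linear_combination (1 - 24 * w) ^ 2 * h + 24 * ((1 - 24 * w) * d⁄dX ℚ w + 1) * hDw

theorem one_sub_pow_four_mul_W_one (hDw : (1 - 24 * w) * D w = 1) (hW0 : W 0 = w)
    (hWg : SatisfiesGenusRecursion W) : (1 - 24 * w) ^ 4 * W 1 = 96 * w := by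
  have h := one_sub_mul_W_succ hW0 hWg 0
  simp only [Finset.range_zero, Finset.sum_empty, mul_zero, zero_add, Finset.Icc_self,
    Finset.sum_singleton, Nat.sub_self, Finset.HasAntidiagonal.antidiagonal_zero, hW0, mul_one,
    Nat.factorial_two, Nat.cast_ofNat, one_div, Function.iterate_succ_apply,
    Function.iterate_zero_apply] at h
  have hC : (2 : ℚ⟦X⟧) * C 2⁻¹ = 1 := by
    rw [← map_ofNat C 2, ← map_mul]
    norm_num
  linear_combination (1 - 24 * w) ^ 3 * h + 8 * C 2⁻¹ * w * one_sub_pow_three_mul_D_D hDw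
    + 96 * w * hC

end GenusRecursion

theorem stmt9 (w : PowerSeries ℚ) (hw0 : constantCoeff w = 0)
    (hw : (X : ℚ⟦X⟧) = w - 12 * w ^ 2)
    (W : ℕ → PowerSeries ℚ) (hW0 : W 0 = w)
    (hWg : ∀ g, 1 ≤ g →
      W g = 12 * ∑ p ∈ Finset.HasAntidiagonal.antidiagonal g, W p.1 * W p.2
        + 8 * ∑ j ∈ Finset.Icc 1 g, ∑ r ∈ Finset.HasAntidiagonal.antidiagonal (g - j),
            C (1 / ((2 * j).factorial : ℚ)) * (W r.1 * D^[2 * j] (W r.2))) :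
    (∀ g, 1 ≤ g → ∃ P : Polynomial ℚ, P.natDegree ≤ g - 1 ∧
      (1 - 24 * w) ^ (5 * g - 1) * W g = w * Polynomial.aeval w P) ∧
    W 1 = 96 * w * ((1 - 24 * w) ^ 4)⁻¹ := by
  have hDw := one_sub_mul_D_eq_one hw
  refine ⟨fun g hg => ?_, ?_⟩
  · have h := (isPolyDivPow_W hDw hW0 hWg g hg).exists_eq_mul_of_constantCoeff hw0
      (constantCoeff_W hw0 hW0 hWg g)
    rwa [aeval_one_sub_mul_X] at h
  · rw [PowerSeries.eq_mul_inv_iff_mul_eq (by simp [hw0]), mul_comm]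
    exact one_sub_pow_four_mul_W_one hDw hW0 hWg
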